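/- arXiv:1210.8109 — 6 statements merged into one kernel-verified Lean document; each statement's English description precedes it below -/
import Mathlib

section
/- Let G be an undirected connected multigraph with vertex set V and Laplacian matrix L. If D₀ and D₁ are divisors (integer-valued functions on V) with D₀ - D₁ in the image of L over ℤ, then there exists a unique integer vector σ with σ ≥ 0 componentwise, σ not strictly positive in every coordinate, and D₀ - Lσ = D₁. -/
open Finset

/-- Laplacian of a loopless multigraph given by edge multiplicities `m`. -/
def lap {V : Type*} [Fintype V] [DecidableEq V] (m : V → V → ℕ) : Matrix V V ℤ :=
  fun u v => if u = v then (∑ w, (m u w : ℤ)) else -(m u v : ℤ)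

lemma lap_apply {V : Type*} [Fintype V] [DecidableEq V] (m : V → V → ℕ)
    (hloop : ∀ v, m v v = 0) (x : V → ℤ) (v : V) :
    (lap m).mulVec x v = ∑ w, (m v w : ℤ) * (x v - x w) := by
  unfold lap Matrix.mulVec dotProduct
  simp only [mul_sub, Finset.sum_sub_distrib, ← Finset.sum_mul]
  have h : ∀ w ∈ Finset.univ, (if v = w then (∑ w', (m v w' : ℤ)) else -(m v w : ℤ)) * x w
      = (if v = w then (∑ w', (m v w' : ℤ)) * x v else 0) - (m v w : ℤ) * x w := by
    intro w _
    split
    · next h => subst h; simp [hloop v]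
    · ring
  rw [Finset.sum_congr rfl h, Finset.sum_sub_distrib, Finset.sum_ite_eq]
  simp

lemma kernel_const {V : Type*} [Fintype V] [DecidableEq V]
    (m : V → V → ℕ) (hsymm : ∀ u v, m u v = m v u) (hloop : ∀ v, m v v = 0)
    (hconn : (SimpleGraph.fromRel (fun u v => 0 < m u v)).Connected)
    (x : V → ℤ) (hx : (lap m).mulVec x = 0) : ∀ v w, x v = x w := by
  have hne : (Finset.univ : Finset V).Nonempty := by
    have := hconn.nonempty
    exact Finset.univ_nonempty
  obtain ⟨u, -, hu⟩ := Finset.exists_max_image Finset.univ x hne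
  set G := SimpleGraph.fromRel (fun u v => 0 < m u v) with hG
  -- step: if x a is max and a adj b then x b = x a
  have key : ∀ a b : V, x a = x u → G.Adj a b → x b = x u := by
    intro a b ha hab
    rw [hG, SimpleGraph.fromRel_adj] at hab
    have hm : 0 < m a b := by
      rcases hab.2 with h | h
      · exact h
      · rw [hsymm]; exact h
    have h0 : ∑ w, (m a w : ℤ) * (x a - x w) = 0 := by
      rw [← lap_apply m hloop x a, hx]; rfl
    have hnn : ∀ w ∈ Finset.univ, 0 ≤ (m a w : ℤ) * (x a - x w) := by
      intro w _
      apply mul_nonneg (by positivity)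
      have := hu w (Finset.mem_univ w)
      omega
    have := (Finset.sum_eq_zero_iff_of_nonneg hnn).mp h0 b (Finset.mem_univ b)
    have hmb : (0:ℤ) < (m a b : ℤ) := by exact_mod_cast hm
    have : x a - x b = 0 := by
      rcases mul_eq_zero.mp this with h | h
      · omega
      · exact h
    omega
  have hw : ∀ (a v : V), G.Walk a v → x a = x u → x v = x u := by
    intro a v p
    induction p with
    | nil => exact fun h => h
    | cons h p ih => intro ha; exact ih (key _ _ ha h)
  have hall : ∀ v, x v = x u := by
    intro v
    obtain ⟨p⟩ := hconn u v
    exact hw u v p rfl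
  intro v w; rw [hall v, hall w]

lemma lap_mulVec_const {V : Type*} [Fintype V] [DecidableEq V]
    (m : V → V → ℕ) (hloop : ∀ v, m v v = 0) (c : ℤ) :
    (lap m).mulVec (fun _ => c) = 0 := by
  funext v
  rw [lap_apply m hloop]
  simp

theorem stmt0 {V : Type*} [Fintype V] [DecidableEq V]
    (m : V → V → ℕ) (hsymm : ∀ u v, m u v = m v u) (hloop : ∀ v, m v v = 0)
    (hconn : (SimpleGraph.fromRel (fun u v => 0 < m u v)).Connected)
    (D₀ D₁ : V → ℤ) (hequiv : ∃ τ : V → ℤ, D₀ - (lap m).mulVec τ = D₁) :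
    ∃! σ : V → ℤ, (∀ v, 0 ≤ σ v) ∧ ¬ (∀ v, 0 < σ v) ∧ D₀ - (lap m).mulVec σ = D₁ := by
  obtain ⟨τ, hτ⟩ := hequiv
  have hne : (Finset.univ : Finset V).Nonempty := by
    have := hconn.nonempty
    exact Finset.univ_nonempty
  obtain ⟨u, -, hu⟩ := Finset.exists_min_image Finset.univ τ hne
  refine ⟨fun v => τ v - τ u, ⟨?_, ?_, ?_⟩, ?_⟩
  · intro v; have := hu v (Finset.mem_univ v); show (0:ℤ) ≤ τ v - τ u; omega
  · intro h; have h2 : (0:ℤ) < τ u - τ u := h u; omega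
  · have : (fun v => τ v - τ u) = τ - (fun _ => τ u) := rfl
    rw [this, Matrix.mulVec_sub, lap_mulVec_const m hloop]
    simpa using hτ
  · rintro σ' ⟨hnn', hnp', heq'⟩
    -- both σ' and our σ satisfy L σ = D₀ - D₁
    set σ : V → ℤ := fun v => τ v - τ u with hσ
    have hnn : ∀ v, 0 ≤ σ v := fun v => by
      have := hu v (Finset.mem_univ v); show (0:ℤ) ≤ τ v - τ u; omega
    have hnp : ¬ (∀ v, 0 < σ v) := fun h => by
      have := h u; have h2 : (0:ℤ) < τ u - τ u := this; omega
    have heq : D₀ - (lap m).mulVec σ = D₁ := by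
      have : σ = τ - (fun _ => τ u) := rfl
      rw [this, Matrix.mulVec_sub, lap_mulVec_const m hloop]
      simpa using hτ
    have hker : (lap m).mulVec (σ' - σ) = 0 := by
      rw [Matrix.mulVec_sub]
      have : (lap m).mulVec σ' = (lap m).mulVec σ := by
        have h1 : D₀ - (lap m).mulVec σ' = D₀ - (lap m).mulVec σ := by rw [heq', heq]
        funext v
        have := congrFun h1 v
        simp only [Pi.sub_apply] at this
        omega
      rw [this]; simp
    have hconst := kernel_const m hsymm hloop hconn _ hker
    obtain ⟨v₀, hv₀⟩ : ∃ v, σ' v = 0 := by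
      by_contra h
      push_neg at h
      exact hnp' (fun v => lt_of_le_of_ne (hnn' v) (fun he => h v he.symm))
    have h0 : (σ' - σ) v₀ ≤ 0 := by
      simp only [Pi.sub_apply, hv₀]
      have := hnn v₀; omega
    have h1 : 0 ≤ (σ' - σ) u := by
      simp only [Pi.sub_apply]
      have := hnn' u
      have h2 : σ u = 0 := by show τ u - τ u = 0; ring
      rw [h2]; simpa using hnn' u
    funext v
    have e1 := hconst v₀ u
    have e2 := hconst v v₀
    simp only [Pi.sub_apply] at e1 e2 h0 h1
    omega
end

section
/- Let G be a connected multigraph, Π a partition of V into two connected components A and B, and D the boundary divisor with support in A (D_v = deg_{AB}(v)·χ_A(v)). Then there is no effective divisor D₀ equivalent to D whose support intersects both A and B. -/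
open Finset

/-- Number of edges at `v` crossing between `A` and `B`. -/
def degAB {V : Type*} [Fintype V] [DecidableEq V] (m : V → V → ℕ)
    (A B : Finset V) (v : V) : ℕ :=
  if v ∈ A then ∑ u ∈ B, m v u else if v ∈ B then ∑ u ∈ A, m v u else 0

open Matrix

/-!
Write `D₀ = D + L σ` and look at a vertex `x₀` where `σ` is minimal. At such a vertex `(L σ) x₀ ≤ 0`
with equality only if all neighbours of `x₀` share the minimum, so wherever the divisor being moved
vanishes, `D₀` vanishes too and the minimum spreads to neighbours; by connectivity it then spreads
over a whole side of the cut. If `σ` attains its minimum on `B`, where `D` vanishes, this kills `D₀`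
on `B`. Otherwise `σ - χ_B` attains its minimum on `A`, and since `L χ_B = D_B - D_A`, moving to
`σ - χ_B` exchanges `D = D_A` for the boundary divisor `D_B` supported on `B`, which kills `D₀` on `A`.
Here `D_A = boundaryDivisor m A B` and `D_B = boundaryDivisor m B A`.
-/

theorem SimpleGraph.Preconnected.of_forall_adj {W : Type*} {H : SimpleGraph W} (hH : H.Preconnected)
    {P : W → Prop} (hP : ∀ a b, H.Adj a b → P a → P b) {x y : W} (hx : P x) : P y := by
  induction (H.reachable_iff_reflTransGen x y).1 (hH x y) with
  | refl => exact hx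
  | tail _ hab ih => exact hP _ _ hab ih

section Laplacian

variable {V : Type*} [DecidableEq V] {m : V → V → ℕ}

def boundaryDivisor (m : V → V → ℕ) (A B : Finset V) (v : V) : ℤ :=
  if v ∈ A then ∑ u ∈ B, (m v u : ℤ) else 0

theorem boundaryDivisor_of_notMem {A B : Finset V} {v : V} (hv : v ∉ A) :
    boundaryDivisor m A B v = 0 :=
  if_neg hv

variable [Fintype V]

theorem degAB_mul_indicator_eq_boundaryDivisor (A B : Finset V) :
    (fun v => (degAB m A B v : ℤ) * (if v ∈ A then 1 else 0)) = boundaryDivisor m A B := by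
  ext v
  by_cases hv : v ∈ A <;> simp [boundaryDivisor, degAB, hv]

theorem lap_mulVec_apply (hloop : ∀ v, m v v = 0) (σ : V → ℤ) (v : V) :
    (lap m *ᵥ σ) v = ∑ w, (m v w : ℤ) * (σ v - σ w) := by
  have hentry : ∀ w, lap m v w * σ w
      = (if v = w then (∑ u, (m v u : ℤ)) * σ w else 0) - (m v w : ℤ) * σ w := by
    intro w
    unfold lap
    split_ifs with h
    · subst h; simp [hloop v]
    · ring
  simp only [mulVec, dotProduct, hentry, sum_sub_distrib, sum_ite_eq, mem_univ, if_true, sum_mul,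
    mul_sub]

theorem lap_mulVec_indicator (hloop : ∀ v, m v v = 0) {A B : Finset V} (hAB : IsCompl A B) :
    lap m *ᵥ (fun v => if v ∈ B then 1 else 0) = boundaryDivisor m B A - boundaryDivisor m A B := by
  ext v
  rw [lap_mulVec_apply hloop, ← sum_add_sum_compl A, hAB.compl_eq]
  have hA : ∀ w ∈ A, w ∉ B := fun w hw => disjoint_left.1 hAB.disjoint hw
  by_cases hv : v ∈ A
  · simp +contextual [boundaryDivisor, hv, hA v hv, hA]
  · have hvB : v ∈ B := by simpa [← hAB.compl_eq] using hv
    simp +contextual [boundaryDivisor, hv, hvB, hA]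

theorem eq_zero_and_of_lap_mulVec_min (hloop : ∀ v, m v v = 0) {σ D₀ E : V → ℤ} {x : V}
    (hσ : (lap m *ᵥ σ) x = D₀ x - E x) (hmin : ∀ w, σ x ≤ σ w) (hD₀ : 0 ≤ D₀ x)
    (hE : E x ≤ 0) : D₀ x = 0 ∧ ∀ w, m x w ≠ 0 → σ w = σ x := by
  rw [lap_mulVec_apply hloop] at hσ
  have hterm : ∀ w ∈ univ, (m x w : ℤ) * (σ x - σ w) ≤ 0 := fun w _ =>
    mul_nonpos_of_nonneg_of_nonpos (by positivity) (by linarith [hmin w])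
  have hsum : ∑ w, (m x w : ℤ) * (σ x - σ w) ≤ 0 := sum_nonpos hterm
  refine ⟨by linarith, fun w hw => ?_⟩
  have hzero := (sum_eq_zero_iff_of_nonpos hterm).1 (by linarith) w (mem_univ w)
  have : σ x - σ w = 0 := (mul_eq_zero.1 hzero).resolve_left (by exact_mod_cast hw)
  linarith

theorem eq_zero_on_of_lap_mulVec_min (hsymm : ∀ u v, m u v = m v u) (hloop : ∀ v, m v v = 0)
    {S : Finset V}
    (hS : ((SimpleGraph.fromRel (fun u v => 0 < m u v)).induce (↑S)).Preconnected)
    {σ D₀ E : V → ℤ} (hσ : lap m *ᵥ σ = D₀ - E) (hD₀ : ∀ v, 0 ≤ D₀ v) (hE : ∀ v ∈ S, E v ≤ 0)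
    {x₀ : V} (hx₀ : x₀ ∈ S) (hmin : ∀ w, σ x₀ ≤ σ w) : ∀ v ∈ S, D₀ v = 0 := by
  have hstep : ∀ x ∈ S, σ x = σ x₀ → D₀ x = 0 ∧ ∀ w, m x w ≠ 0 → σ w = σ x :=
    fun x hx hx' => eq_zero_and_of_lap_mulVec_min hloop (congrFun hσ x) (hx' ▸ hmin)
      (hD₀ x) (hE x hx)
  have hspread : ∀ v : (↑S : Set V), σ v = σ x₀ := fun v =>
    hS.of_forall_adj (P := fun z => σ z = σ x₀) (x := ⟨x₀, hx₀⟩) (fun a b hab ha => by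
      obtain ⟨-, hab | hab⟩ := (SimpleGraph.fromRel_adj _ _ _).1 (SimpleGraph.induce_adj.1 hab)
      · exact ((hstep a a.2 ha).2 b hab.ne').trans ha
      · exact ((hstep a a.2 ha).2 b (hsymm a b ▸ hab.ne')).trans ha) rfl
  exact fun v hv => (hstep v hv (hspread ⟨v, hv⟩)).1

end Laplacian

theorem stmt2_general {V : Type*} [Fintype V] [DecidableEq V]
    (m : V → V → ℕ) (hsymm : ∀ u v, m u v = m v u) (hloop : ∀ v, m v v = 0)
    (A B : Finset V) (hdisj : Disjoint A B) (hunion : A ∪ B = Finset.univ)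
    (hAconn : ((SimpleGraph.fromRel (fun u v => 0 < m u v)).induce (↑A)).Connected)
    (hBconn : ((SimpleGraph.fromRel (fun u v => 0 < m u v)).induce (↑B)).Connected)
    (D : V → ℤ) (hD : D = fun v => (degAB m A B v : ℤ) * (if v ∈ A then 1 else 0)) :
    ¬ ∃ D₀ : V → ℤ, (∀ v, 0 ≤ D₀ v) ∧ (∃ σ : V → ℤ, (lap m).mulVec σ = D₀ - D) ∧
      (∃ v ∈ A, D₀ v ≠ 0) ∧ (∃ v ∈ B, D₀ v ≠ 0) := by
  rintro ⟨D₀, hD₀, ⟨σ, hσ⟩, ⟨a, haA, ha⟩, ⟨b, hbB, hb⟩⟩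
  have hAB : IsCompl A B := ⟨hdisj, codisjoint_iff.2 hunion⟩
  rw [hD, degAB_mul_indicator_eq_boundaryDivisor] at hσ
  obtain ⟨x₀, -, hmin⟩ := exists_min_image univ σ ⟨a, mem_univ a⟩
  by_cases hmB : ∃ y ∈ B, σ y = σ x₀
  · obtain ⟨y, hyB, hy⟩ := hmB
    exact hb (eq_zero_on_of_lap_mulVec_min hsymm hloop hBconn.preconnected hσ hD₀
      (fun v hv => (boundaryDivisor_of_notMem (disjoint_right.1 hdisj hv)).le) hyB (fun w => hy ▸ hmin w (mem_univ w)) b hbB)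
  · push Not at hmB
    have hx₀A : x₀ ∈ A := by
      by_contra h
      exact hmB x₀ (by simpa [← hAB.compl_eq] using h) rfl
    set τ : V → ℤ := σ - fun v => if v ∈ B then 1 else 0
    have hτ : lap m *ᵥ τ = D₀ - boundaryDivisor m B A := by
      rw [mulVec_sub, hσ, lap_mulVec_indicator hloop hAB]; abel
    have hτmin : ∀ w, τ x₀ ≤ τ w := fun w => by
      have hw := hmin w (mem_univ w)
      by_cases hwB : w ∈ B
      · have := hmB w hwB
        simp only [τ, Pi.sub_apply, hwB, disjoint_left.1 hdisj hx₀A, if_true, if_false]; omega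
      · simpa [τ, hwB, disjoint_left.1 hdisj hx₀A] using hw
    exact ha (eq_zero_on_of_lap_mulVec_min hsymm hloop hAconn.preconnected hτ hD₀
      (fun v hv => (boundaryDivisor_of_notMem (disjoint_left.1 hdisj hv)).le) hx₀A hτmin a haA)

theorem stmt2 {V : Type*} [Fintype V] [DecidableEq V]
    (m : V → V → ℕ) (hsymm : ∀ u v, m u v = m v u) (hloop : ∀ v, m v v = 0)
    (hconn : (SimpleGraph.fromRel (fun u v => 0 < m u v)).Connected)
    (A B : Finset V) (hdisj : Disjoint A B) (hunion : A ∪ B = Finset.univ)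
    (hAne : A.Nonempty) (hBne : B.Nonempty)
    (hAconn : ((SimpleGraph.fromRel (fun u v => 0 < m u v)).induce (↑A)).Connected)
    (hBconn : ((SimpleGraph.fromRel (fun u v => 0 < m u v)).induce (↑B)).Connected)
    (D : V → ℤ) (hD : D = fun v => (degAB m A B v : ℤ) * (if v ∈ A then 1 else 0)) :
    ¬ ∃ D₀ : V → ℤ, (∀ v, 0 ≤ D₀ v) ∧ (∃ σ : V → ℤ, (lap m).mulVec σ = D₀ - D) ∧
      (∃ v ∈ A, D₀ v ≠ 0) ∧ (∃ v ∈ B, D₀ v ≠ 0) :=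
  stmt2_general m hsymm hloop A B hdisj hunion hAconn hBconn D hD
end

section
/- Let G be a finite connected simple graph with an acyclic orientation o having a unique source, and let t be a sink of o. Then removing t (and all edges incident to t) leaves a connected graph. -/
/-!
Acyclicity on a finite vertex set makes the orientation well-founded, so every vertex other than
the unique source `s` has an in-neighbour, and following in-neighbours backwards shows that every
vertex is reached from `s` along a directed path. A directed path can only pass through a sink as
its last vertex, so these paths join every vertex other than `t` to `s` while avoiding `t`. Since
there is a second vertex, `s` has an out-neighbour and is therefore not the sink `t`.
-/

open Relation

theorem wellFounded_of_forall_not_transGen_self {V : Type*} [Finite V] {r : V → V → Prop}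
    (hacyc : ∀ v, ¬ TransGen r v v) : WellFounded r :=
  haveI : IsTrans V (TransGen r) := ⟨fun _ _ _ => TransGen.trans⟩
  haveI : Std.Irrefl (TransGen r) := ⟨hacyc⟩
  Subrelation.wf TransGen.single (Finite.wellFounded_of_trans_of_irrefl _)

theorem reflTransGen_of_unique_minimal {V : Type*} {r : V → V → Prop} (hwf : WellFounded r)
    {s : V} (hunique : ∀ v, (∀ u, ¬ r u v) → v = s) (v : V) : ReflTransGen r s v := by
  induction v using hwf.induction with
  | _ v ih =>
    by_cases hv : ∀ u, ¬ r u v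
    · rw [hunique v hv]
    · obtain ⟨u, hu⟩ := not_forall_not.mp hv
      exact (ih u hu).tail hu

namespace SimpleGraph

variable {V : Type*} {G : SimpleGraph V} {r : V → V → Prop} {t : V}

theorem reachable_induce_ne_of_reflTransGen (hsub : ∀ u v, r u v → G.Adj u v)
    (ht : ∀ u, ¬ r t u) {a b : V} (ha : a ≠ t) (h : ReflTransGen r a b) (hb : b ≠ t) :
    (G.induce {v | v ≠ t}).Reachable ⟨a, ha⟩ ⟨b, hb⟩ := by
  induction h with
  | refl => rfl
  | @tail c d _ hcd ih =>
    have hc : c ≠ t := by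
      rintro rfl
      exact ht d hcd
    have hadj : (G.induce {v | v ≠ t}).Adj ⟨c, hc⟩ ⟨d, hb⟩ := by
      simpa using hsub c d hcd
    exact (ih hc).trans hadj.reachable

theorem connected_induce_ne_of_forall_reflTransGen (hsub : ∀ u v, r u v → G.Adj u v)
    (ht : ∀ u, ¬ r t u) {s : V} (hst : s ≠ t) (hreach : ∀ v, ReflTransGen r s v) :
    (G.induce {v | v ≠ t}).Connected :=
  haveI : Nonempty {v : V | v ≠ t} := ⟨⟨s, hst⟩⟩
  ⟨fun x y => (reachable_induce_ne_of_reflTransGen hsub ht hst (hreach x) x.2).symm.trans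
    (reachable_induce_ne_of_reflTransGen hsub ht hst (hreach y) y.2)⟩

end SimpleGraph

theorem stmt4_general {V : Type*} [Fintype V] (G : SimpleGraph V)
    (hcard : 2 ≤ Fintype.card V)
    (o : V → V → Prop)
    (hsub : ∀ u v, o u v → G.Adj u v)
    (hacyc : ∀ v, ¬ Relation.TransGen o v v)
    (s : V)
    (hunique : ∀ v, (∀ u, ¬ o u v) → v = s)
    (t : V) (ht : ∀ u, ¬ o t u) :
    (G.induce {v : V | v ≠ t}).Connected := by
  have hreach : ∀ v, ReflTransGen o s v :=
    reflTransGen_of_unique_minimal (wellFounded_of_forall_not_transGen_self hacyc) hunique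
  have hst : s ≠ t := by
    obtain ⟨u, hus⟩ := Fintype.exists_ne_of_one_lt_card hcard s
    rcases (hreach u).cases_head with rfl | ⟨w, hsw, -⟩
    · exact absurd rfl hus
    · rintro rfl
      exact ht w hsw
  exact G.connected_induce_ne_of_forall_reflTransGen hsub ht hst hreach

theorem stmt4 {V : Type*} [Fintype V] (G : SimpleGraph V)
    (hcard : 2 ≤ Fintype.card V) (hconn : G.Connected)
    (o : V → V → Prop)
    (hsub : ∀ u v, o u v → G.Adj u v)
    (htotal : ∀ u v, G.Adj u v → o u v ∨ o v u)
    (hanti : ∀ u v, o u v → ¬ o v u)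
    (hacyc : ∀ v, ¬ Relation.TransGen o v v)
    (s : V) (hs : ∀ u, ¬ o u s)
    (hunique : ∀ v, (∀ u, ¬ o u v) → v = s)
    (t : V) (ht : ∀ u, ¬ o t u) :
    (G.induce {v : V | v ≠ t}).Connected :=
  stmt4_general G hcard o hsub hacyc s hunique t ht
end

section
/- Let G be a finite connected simple graph with a fixed vertex s, and let o be an acyclic orientation with reachable set R(o) ≠ V (from s). Define o' by reversing all edges between R(o) and V \\ R(o) and keeping the others. Then o' is acyclic and R(o) ⊊ R(o'). -/
/-! The reachable set `R` of an orientation is closed under its edges, so every edge crossing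
the cut `(R, Rᶜ)` points into `R`; after flipping, every crossing edge points out of `R`.
Hence a directed walk of the flipped orientation either stays on one side of the cut, where it
is a walk of the original orientation, or crosses it exactly once, from `R` to `Rᶜ`, and never
returns. So a cycle would be a cycle of `o`. Since `G` is connected and `R ≠ V`, some edge
crosses the cut, and after flipping it adds its endpoint outside `R` to the reachable set. -/

/-- The set of vertices reachable from `s` via directed paths of `o`. -/
def reachSet {V : Type*} (s : V) (o : V → V → Prop) : Set V :=
  {w : V | Relation.ReflTransGen o s w}

/-- Reverse all edges between the reachable set of `s` and its complement. -/
def flipStep {V : Type*} (s : V) (o : V → V → Prop) : V → V → Prop :=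
  fun u v =>
    (((u ∈ reachSet s o) ↔ (v ∈ reachSet s o)) ∧ o u v) ∨
    (¬((u ∈ reachSet s o) ↔ (v ∈ reachSet s o)) ∧ o v u)

section Flip

variable {V : Type*} {s : V} {o : V → V → Prop}

theorem mem_reachSet_of_rel {u v : V} (hu : u ∈ reachSet s o) (huv : o u v) :
    v ∈ reachSet s o :=
  Relation.ReflTransGen.tail hu huv

theorem flipStep_crossing {u v : V} (hne : ¬(u ∈ reachSet s o ↔ v ∈ reachSet s o))
    (hvu : o v u) : u ∈ reachSet s o ∧ v ∉ reachSet s o := by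
  have hv : v ∉ reachSet s o := fun hv => hne (iff_of_true (mem_reachSet_of_rel hv hvu) hv)
  exact ⟨by_contra fun hu => hne (iff_of_false hu hv), hv⟩

theorem transGen_flipStep {a b : V} (h : Relation.TransGen (flipStep s o) a b) :
    (a ∈ reachSet s o ∧ b ∉ reachSet s o) ∨
      ((a ∈ reachSet s o ↔ b ∈ reachSet s o) ∧ Relation.TransGen o a b) := by
  induction h with
  | single hab =>
    rcases hab with ⟨hiff, hab⟩ | ⟨hne, hba⟩
    · exact .inr ⟨hiff, .single hab⟩
    · exact .inl (flipStep_crossing hne hba)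
  | tail _ hbc ih =>
    rcases ih with ⟨ha, hb⟩ | ⟨hiff, hab⟩ <;> rcases hbc with ⟨hiff', hbc⟩ | ⟨hne, hcb⟩
    · exact .inl ⟨ha, fun hc => hb (hiff'.mpr hc)⟩
    · exact absurd (flipStep_crossing hne hcb).1 hb
    · exact .inr ⟨hiff.trans hiff', hab.tail hbc⟩
    · obtain ⟨hb, hc⟩ := flipStep_crossing hne hcb
      exact .inl ⟨hiff.mpr hb, hc⟩

theorem flipStep_acyclic (hacyc : ∀ v, ¬Relation.TransGen o v v) (v : V) :
    ¬Relation.TransGen (flipStep s o) v v := fun hv =>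
  (transGen_flipStep hv).elim (fun h => h.2 h.1) (fun h => hacyc v h.2)

theorem reachSet_subset_reachSet_flipStep : reachSet s o ⊆ reachSet s (flipStep s o) := by
  intro w hw
  induction hw with
  | refl => exact .refl
  | tail hb hbc ih => exact ih.tail (.inl ⟨iff_of_true hb (mem_reachSet_of_rel hb hbc), hbc⟩)

theorem flipStep_of_adj_of_mem_of_notMem {G : SimpleGraph V}
    (htotal : ∀ u v, G.Adj u v → o u v ∨ o v u) {u v : V} (hadj : G.Adj u v)
    (hu : u ∈ reachSet s o) (hv : v ∉ reachSet s o) : flipStep s o u v := by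
  have hvu : o v u := (htotal u v hadj).resolve_left fun huv => hv (mem_reachSet_of_rel hu huv)
  exact .inr ⟨fun hiff => hv (hiff.mp hu), hvu⟩

end Flip

theorem stmt7_general {V : Type*} (G : SimpleGraph V) (hconn : G.Connected)
    (s : V) (o : V → V → Prop)
    (htotal : ∀ u v, G.Adj u v → o u v ∨ o v u)
    (hacyc : ∀ v, ¬ Relation.TransGen o v v)
    (hR : reachSet s o ≠ Set.univ) :
    (∀ v, ¬ Relation.TransGen (flipStep s o) v v) ∧
      reachSet s o ⊂ reachSet s (flipStep s o) := by
  obtain ⟨t, ht⟩ := (Set.ne_univ_iff_exists_notMem _).mp hR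
  obtain ⟨d, -, hu, hv⟩ := (hconn s t).some.exists_boundary_dart _ Relation.ReflTransGen.refl ht
  have hv' : d.snd ∈ reachSet s (flipStep s o) :=
    (reachSet_subset_reachSet_flipStep hu).tail
      (flipStep_of_adj_of_mem_of_notMem htotal d.adj hu hv)
  exact ⟨flipStep_acyclic hacyc,
    (Set.ssubset_iff_of_subset reachSet_subset_reachSet_flipStep).mpr ⟨_, hv', hv⟩⟩

theorem stmt7 {V : Type*} [Fintype V] (G : SimpleGraph V) (hconn : G.Connected)
    (s : V) (o : V → V → Prop)
    (hsub : ∀ u v, o u v → G.Adj u v)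
    (htotal : ∀ u v, G.Adj u v → o u v ∨ o v u)
    (hanti : ∀ u v, o u v → ¬ o v u)
    (hacyc : ∀ v, ¬ Relation.TransGen o v v)
    (hR : reachSet s o ≠ Set.univ) :
    (∀ v, ¬ Relation.TransGen (flipStep s o) v v) ∧
      reachSet s o ⊂ reachSet s (flipStep s o) :=
  stmt7_general G hconn s o htotal hacyc hR
end

section
/- Let Δ^{2k} be the simplex on vertices {1,…,2k}, let B = {1,…,k} be base vertices, and for each j ∈ B let e_j ∈ {k+1,…,2k} with e_i ≥ e_j whenever i ≤ j. Set A_∅ = [1,…,k] and for J ⊆ B with the e_j (j ∈ J) pairwise distinct, set A_J = [(B \\ J) ∪ {e_j : j ∈ J}]. Let 𝒥 be the collection of such J. Then with signs ε_∅ = 1, ε_{{j}} = (-1)^{j-1+k}, and ε_J = Π_{j∈J} ε_{{j}}, the chain Σ_{J∈𝒥} ε_J A_J is a cycle: ∂(Σ_{J∈𝒥} ε_J A_J) = 0 in the simplicial chain complex over ℤ. -/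
open Finset

noncomputable def bnd (s : Finset ℕ) : Finset ℕ →₀ ℤ :=
  ∑ a ∈ s, (-1 : ℤ) ^ ((s.filter (fun b => b < a)).card) • Finsupp.single (s.erase a) (1 : ℤ)

/-- pick an element of `J` with `e`-value `v` (if any). -/
noncomputable def pick (e : ℕ → ℕ) (J : Finset ℕ) (v : ℕ) : ℕ :=
  if h : (J.filter fun x => e x = v).Nonempty then (J.filter fun x => e x = v).min' h else 0

lemma pick_mem {e : ℕ → ℕ} {J : Finset ℕ} {v : ℕ} (h : ∃ j ∈ J, e j = v) :
    pick e J v ∈ J ∧ e (pick e J v) = v := by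
  obtain ⟨j, hj, hje⟩ := h
  have hne : (J.filter fun x => e x = v).Nonempty := ⟨j, by simp [hj, hje]⟩
  rw [pick, dif_pos hne]
  have := Finset.min'_mem _ hne
  simpa using this

lemma pick_unique {e : ℕ → ℕ} {J : Finset ℕ} {x : ℕ} (hinj : Set.InjOn e ↑J) (hx : x ∈ J) :
    pick e J (e x) = x := by
  obtain ⟨h1, h2⟩ := pick_mem ⟨x, hx, rfl⟩
  exact hinj h1 hx h2

/-- the face associated to `J`. -/
def face (k : ℕ) (e : ℕ → ℕ) (J : Finset ℕ) : Finset ℕ := (Finset.Icc 1 k \ J) ∪ J.image e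

section aux
variable {k : ℕ} {e : ℕ → ℕ}

lemma image_gt (he : ∀ j ∈ Finset.Icc 1 k, e j ∈ Finset.Icc (k+1) (2*k))
    {J : Finset ℕ} (hJ : J ⊆ Finset.Icc 1 k) : ∀ a ∈ J.image e, k < a := by
  intro a ha
  obtain ⟨j, hj, rfl⟩ := Finset.mem_image.mp ha
  have := he j (hJ hj)
  rw [Finset.mem_Icc] at this
  omega

lemma mem_face_le (he : ∀ j ∈ Finset.Icc 1 k, e j ∈ Finset.Icc (k+1) (2*k))
    {J : Finset ℕ} (hJ : J ⊆ Finset.Icc 1 k) {a : ℕ} (ha : a ∈ face k e J) (hak : a ≤ k) :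
    a ∈ Finset.Icc 1 k \ J := by
  rcases Finset.mem_union.mp ha with h | h
  · exact h
  · exact absurd (image_gt he hJ a h) (by omega)

lemma image_erase_injOn {J : Finset ℕ} (hinj : Set.InjOn e ↑J) {j : ℕ} (hj : j ∈ J) :
    (J.erase j).image e = (J.image e).erase (e j) := by
  ext x
  simp only [Finset.mem_image, Finset.mem_erase]
  constructor
  · rintro ⟨i, ⟨hij, hi⟩, rfl⟩
    exact ⟨fun h => hij (hinj hi hj h), ⟨i, hi, rfl⟩⟩
  · rintro ⟨hx, i, hi, rfl⟩
    exact ⟨i, ⟨fun h => hx (by rw [h]), hi⟩, rfl⟩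

lemma erase_face_base (he : ∀ j ∈ Finset.Icc 1 k, e j ∈ Finset.Icc (k+1) (2*k))
    {J : Finset ℕ} (hJ : J ⊆ Finset.Icc 1 k) {b : ℕ} (hb : b ∈ Finset.Icc 1 k \ J) :
    (face k e J).erase b = (Finset.Icc 1 k \ insert b J) ∪ J.image e := by
  have hbk : b ≤ k := by have := Finset.mem_sdiff.mp hb; simp [Finset.mem_Icc] at this; omega
  have h2 : (J.image e).erase b = J.image e :=
    Finset.erase_eq_of_notMem (fun h => by have := image_gt he hJ b h; omega)
  rw [face, Finset.erase_union_distrib, h2, Finset.sdiff_insert]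

lemma erase_face_e (he : ∀ j ∈ Finset.Icc 1 k, e j ∈ Finset.Icc (k+1) (2*k))
    {J : Finset ℕ} (hJ : J ⊆ Finset.Icc 1 k) (hinj : Set.InjOn e ↑J) {j : ℕ} (hj : j ∈ J) :
    (face k e J).erase (e j) = (Finset.Icc 1 k \ J) ∪ (J.erase j).image e := by
  have hejk : k < e j := image_gt he hJ _ (Finset.mem_image_of_mem e hj)
  have h2 : (Finset.Icc 1 k \ J).erase (e j) = Finset.Icc 1 k \ J :=
    Finset.erase_eq_of_notMem (fun h => by
      obtain ⟨h1, -⟩ := Finset.mem_sdiff.mp h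
      rw [Finset.mem_Icc] at h1; omega)
  rw [face, Finset.erase_union_distrib, h2, ← image_erase_injOn hinj hj]

lemma count_base (he : ∀ j ∈ Finset.Icc 1 k, e j ∈ Finset.Icc (k+1) (2*k))
    {J : Finset ℕ} (hJ : J ⊆ Finset.Icc 1 k) {b : ℕ} (hbk : b ≤ k) :
    (face k e J).filter (fun x => x < b) = (Finset.Icc 1 k \ J).filter (fun x => x < b) := by
  rw [face, Finset.filter_union]
  have : (J.image e).filter (fun x => x < b) = ∅ := by
    rw [Finset.filter_eq_empty_iff]
    intro x hx
    have := image_gt he hJ x hx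
    omega
  rw [this, Finset.union_empty]

lemma count_e (he : ∀ j ∈ Finset.Icc 1 k, e j ∈ Finset.Icc (k+1) (2*k))
    (hmono : ∀ i ∈ Finset.Icc 1 k, ∀ j ∈ Finset.Icc 1 k, i ≤ j → e j ≤ e i)
    {J : Finset ℕ} (hJ : J ⊆ Finset.Icc 1 k) (hinj : Set.InjOn e ↑J) {j : ℕ} (hj : j ∈ J) :
    ((face k e J).filter (fun x => x < e j)).card
      = (Finset.Icc 1 k \ J).card + (J.filter (fun i => j < i)).card := by
  have hejk : k < e j := image_gt he hJ _ (Finset.mem_image_of_mem e hj)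
  rw [face, Finset.filter_union]
  have h1 : (Finset.Icc 1 k \ J).filter (fun x => x < e j) = Finset.Icc 1 k \ J := by
    apply Finset.filter_true_of_mem
    intro x hx
    obtain ⟨h1', -⟩ := Finset.mem_sdiff.mp hx
    rw [Finset.mem_Icc] at h1'
    omega
  have h2 : (J.image e).filter (fun x => x < e j) = (J.filter (fun i => e i < e j)).image e := by
    rw [Finset.filter_image]
  have h3 : J.filter (fun i => e i < e j) = J.filter (fun i => j < i) := by
    apply Finset.filter_congr
    intro i hi
    have hiI := hJ hi
    have hjI := hJ hj
    constructor
    · intro h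
      by_contra hc
      push_neg at hc
      exact absurd (hmono i hiI j hjI hc) (by omega)
    · intro h
      have h1 := hmono j hjI i hiI (le_of_lt h)
      have h2 : e i ≠ e j := fun hne => (by omega : j ≠ i) (hinj hj hi hne.symm)
      omega
  have hd : Disjoint (Finset.Icc 1 k \ J) ((J.filter (fun i => j < i)).image e) := by
    rw [Finset.disjoint_left]
    intro x hx hx2
    have := image_gt he hJ x (Finset.image_subset_image (Finset.filter_subset _ _) hx2)
    obtain ⟨h1', -⟩ := Finset.mem_sdiff.mp hx
    rw [Finset.mem_Icc] at h1'
    omega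
  rw [h1, h2, h3, Finset.card_union_of_disjoint hd, Finset.card_image_of_injOn
    (hinj.mono (by exact_mod_cast Finset.filter_subset _ _))]

lemma pow_cancel {m n : ℕ} (h : (m + n) % 2 = 1) : (-1:ℤ)^m + (-1:ℤ)^n = 0 := by
  rcases Nat.even_or_odd m with h1 | h1
  · rw [Even.neg_one_pow h1, Odd.neg_one_pow (by rw [Nat.odd_iff]; rw [Nat.even_iff] at h1; omega)]
    ring
  · rw [Odd.neg_one_pow h1, Even.neg_one_pow (by rw [Nat.even_iff]; rw [Nat.odd_iff] at h1; omega)]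
    ring

lemma filter_lt_sdiff_insert (s J : Finset ℕ) (b : ℕ) :
    (s \ J).filter (fun x => x < b) = (s \ insert b J).filter (fun x => x < b) := by
  ext x
  simp only [Finset.mem_filter, Finset.mem_sdiff, Finset.mem_insert]
  constructor
  · rintro ⟨⟨h1, h2⟩, h3⟩
    exact ⟨⟨h1, fun h => h.elim (fun h' => by omega) h2⟩, h3⟩
  · rintro ⟨⟨h1, h2⟩, h3⟩
    exact ⟨⟨h1, fun h => h2 (Or.inr h)⟩, h3⟩

lemma filter_split {K : Finset ℕ} (hK : K ⊆ Finset.Icc 1 k) (p : ℕ → Prop) [DecidablePred p] :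
    ((Finset.Icc 1 k).filter p).card = ((Finset.Icc 1 k \ K).filter p).card + (K.filter p).card := by
  rw [← Finset.card_union_of_disjoint (Finset.disjoint_filter_filter Finset.sdiff_disjoint),
    ← Finset.filter_union, Finset.sdiff_union_of_subset hK]

lemma filter_lt_card {b : ℕ} (hb1 : 1 ≤ b) (hbk : b ≤ k) :
    ((Finset.Icc 1 k).filter (fun x => x < b)).card = b - 1 := by
  have h : (Finset.Icc 1 k).filter (fun x => x < b) = Finset.Ico 1 b := by
    ext x; simp only [Finset.mem_filter, Finset.mem_Icc, Finset.mem_Ico]; omega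
  rw [h, Nat.card_Ico]

lemma erase_split {K : Finset ℕ} {b : ℕ} (hb : b ∈ K) :
    K.card = (K.filter (fun x => x < b)).card + (K.filter (fun x => b < x)).card + 1 := by
  have h1 : K.filter (fun x => x < b) ∪ K.filter (fun x => b < x) = K.erase b := by
    ext x
    simp only [Finset.mem_union, Finset.mem_filter, Finset.mem_erase]
    constructor
    · rintro (⟨h1, h2⟩ | ⟨h1, h2⟩) <;> exact ⟨by omega, h1⟩
    · rintro ⟨h1, h2⟩
      rcases Nat.lt_or_ge x b with h | h
      · exact Or.inl ⟨h2, h⟩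
      · exact Or.inr ⟨h2, by omega⟩
  have h2 : Disjoint (K.filter (fun x => x < b)) (K.filter (fun x => b < x)) := by
    rw [Finset.disjoint_left]
    intro x hx hx2
    simp only [Finset.mem_filter] at hx hx2
    omega
  have h3 := Finset.card_union_of_disjoint h2
  rw [h1, Finset.card_erase_of_mem hb] at h3
  have : 1 ≤ K.card := Finset.card_pos.mpr ⟨b, hb⟩
  omega

lemma interval_card {K : Finset ℕ} {m M : ℕ} (hm : m ∈ K) (hmM : m < M)
    (hall : ∀ x, m < x → x < M → x ∈ Finset.Icc 1 k \ K) :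
    ((Finset.Icc 1 k \ K).filter (fun x => x < M)).card
      = ((Finset.Icc 1 k \ K).filter (fun x => x < m)).card + (M - m - 1) := by
  have h1 : (Finset.Icc 1 k \ K).filter (fun x => x < M)
      = (Finset.Icc 1 k \ K).filter (fun x => x < m) ∪ Finset.Ioo m M := by
    ext x
    simp only [Finset.mem_filter, Finset.mem_union, Finset.mem_Ioo]
    constructor
    · rintro ⟨h1, h2⟩
      rcases Nat.lt_or_ge x m with h | h
      · exact Or.inl ⟨h1, h⟩
      · refine Or.inr ⟨?_, h2⟩
        rcases Nat.eq_or_lt_of_le h with rfl | h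
        · exact absurd hm (Finset.mem_sdiff.mp h1).2
        · exact h
    · rintro (⟨h1, h2⟩ | ⟨h1, h2⟩)
      · exact ⟨h1, by omega⟩
      · exact ⟨hall x h1 h2, h2⟩
  have h2 : Disjoint ((Finset.Icc 1 k \ K).filter (fun x => x < m)) (Finset.Ioo m M) := by
    rw [Finset.disjoint_left]
    intro x hx hx2
    simp only [Finset.mem_filter] at hx
    simp only [Finset.mem_Ioo] at hx2
    omega
  rw [h1, Finset.card_union_of_disjoint h2, Nat.card_Ioo]

lemma caseA (he : ∀ j ∈ Finset.Icc 1 k, e j ∈ Finset.Icc (k+1) (2*k))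
    (hmono : ∀ i ∈ Finset.Icc 1 k, ∀ j ∈ Finset.Icc 1 k, i ≤ j → e j ≤ e i)
    {J : Finset ℕ} (hJ : J ⊆ Finset.Icc 1 k) (hinj : Set.InjOn e ↑J)
    {b : ℕ} (hb : b ∈ Finset.Icc 1 k \ J) (hnb : e b ∉ J.image e) :
    Finsupp.single ((face k e J).erase b)
        ((∏ j ∈ J, (-1 : ℤ) ^ (j - 1 + k)) * (-1) ^ (((face k e J).filter (fun x => x < b)).card))
      + Finsupp.single ((face k e (insert b J)).erase (e b))
        ((∏ j ∈ insert b J, (-1 : ℤ) ^ (j - 1 + k)) *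
          (-1) ^ (((face k e (insert b J)).filter (fun x => x < e b)).card)) = 0 := by
  obtain ⟨hbI, hbJ⟩ := Finset.mem_sdiff.mp hb
  have hbk : b ≤ k := (Finset.mem_Icc.mp hbI).2
  have hb1 : 1 ≤ b := (Finset.mem_Icc.mp hbI).1
  set K := insert b J with hKdef
  have hK : K ⊆ Finset.Icc 1 k := Finset.insert_subset hbI hJ
  have hinjK : Set.InjOn e ↑K := by
    rw [hKdef, Finset.coe_insert, Set.injOn_insert (by exact_mod_cast hbJ)]
    exact ⟨hinj, by rw [← Finset.coe_image]; exact_mod_cast hnb⟩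
  have hbK : b ∈ K := Finset.mem_insert_self b J
  have heq1 : (face k e J).erase b = (Finset.Icc 1 k \ K) ∪ J.image e := erase_face_base he hJ hb
  have heq2 : (face k e K).erase (e b) = (Finset.Icc 1 k \ K) ∪ J.image e := by
    rw [erase_face_e he hK hinjK hbK, Finset.erase_insert hbJ]
  have hc1 : (face k e J).filter (fun x => x < b)
      = (Finset.Icc 1 k \ K).filter (fun x => x < b) := by
    rw [count_base he hJ hbk, hKdef, ← filter_lt_sdiff_insert]
  have hc2 : ((face k e K).filter (fun x => x < e b)).card
      = (Finset.Icc 1 k \ K).card + (K.filter (fun i => b < i)).card :=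
    count_e he hmono hK hinjK hbK
  have hprod : (∏ j ∈ K, (-1 : ℤ) ^ (j - 1 + k))
      = (-1 : ℤ) ^ (b - 1 + k) * ∏ j ∈ J, (-1 : ℤ) ^ (j - 1 + k) := Finset.prod_insert hbJ
  rw [heq1, heq2, hc1, hc2, hprod, ← Finsupp.single_add]
  have hF1 := filter_split hK (fun x => x < b)
  have hF2 := filter_lt_card (k := k) hb1 hbk
  have hF3 := erase_split hbK
  have hF4 : (Finset.Icc 1 k \ K).card + K.card = k := by
    rw [Finset.card_sdiff_add_card_eq_card hK, Nat.card_Icc]; omega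
  have hpar : ((((Finset.Icc 1 k \ K).filter (fun x => x < b)).card)
      + ((b - 1 + k) + ((Finset.Icc 1 k \ K).card + (K.filter (fun i => b < i)).card))) % 2 = 1 := by
    omega
  have hc := pow_cancel hpar
  have : (∏ j ∈ J, (-1 : ℤ) ^ (j - 1 + k)) * (-1) ^ (((Finset.Icc 1 k \ K).filter (fun x => x < b)).card)
      + (-1 : ℤ) ^ (b - 1 + k) * (∏ j ∈ J, (-1 : ℤ) ^ (j - 1 + k)) *
        (-1) ^ ((Finset.Icc 1 k \ K).card + (K.filter (fun i => b < i)).card) = 0 := by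
    rw [pow_add] at hc ⊢
    linear_combination (∏ j ∈ J, (-1 : ℤ) ^ (j - 1 + k)) * hc
  rw [this, Finsupp.single_zero]

lemma caseB (he : ∀ j ∈ Finset.Icc 1 k, e j ∈ Finset.Icc (k+1) (2*k))
    (hmono : ∀ i ∈ Finset.Icc 1 k, ∀ j ∈ Finset.Icc 1 k, i ≤ j → e j ≤ e i)
    {J : Finset ℕ} (hJ : J ⊆ Finset.Icc 1 k) (hinj : Set.InjOn e ↑J)
    {b : ℕ} (hb : b ∈ Finset.Icc 1 k \ J) (heb : e b ∈ J.image e) :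
    Finsupp.single ((face k e J).erase b)
        ((∏ j ∈ J, (-1 : ℤ) ^ (j - 1 + k)) * (-1) ^ (((face k e J).filter (fun x => x < b)).card))
      + Finsupp.single ((face k e (insert b (J.erase (pick e J (e b))))).erase (pick e J (e b)))
        ((∏ i ∈ insert b (J.erase (pick e J (e b))), (-1 : ℤ) ^ (i - 1 + k)) *
          (-1) ^ (((face k e (insert b (J.erase (pick e J (e b))))).filter
            (fun x => x < pick e J (e b))).card)) = 0 := by
  obtain ⟨hbI, hbJ⟩ := Finset.mem_sdiff.mp hb
  have hbk : b ≤ k := (Finset.mem_Icc.mp hbI).2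
  have hb1 : 1 ≤ b := (Finset.mem_Icc.mp hbI).1
  obtain ⟨j0, hj0, hj0e⟩ := Finset.mem_image.mp heb
  obtain ⟨hpJ, hpe⟩ := pick_mem (e := e) ⟨j0, hj0, hj0e⟩
  set j := pick e J (e b) with hjdef
  have hjI : j ∈ Finset.Icc 1 k := hJ hpJ
  have hjk : j ≤ k := (Finset.mem_Icc.mp hjI).2
  have hj1 : 1 ≤ j := (Finset.mem_Icc.mp hjI).1
  have hbj : b ≠ j := fun h => hbJ (h ▸ hpJ)
  set J' := insert b (J.erase j) with hJ'def
  set K := insert b J with hKdef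
  have hbJ' : b ∉ J.erase j := fun h => hbJ (Finset.mem_of_mem_erase h)
  have hKeq : insert j J' = K := by
    rw [hJ'def, Finset.insert_comm, Finset.insert_erase hpJ]
  have hJ'sub : J' ⊆ Finset.Icc 1 k :=
    Finset.insert_subset hbI ((Finset.erase_subset _ _).trans hJ)
  have hjJ' : j ∉ J' := by
    rw [hJ'def, Finset.mem_insert]
    rintro (h | h)
    · exact hbj h.symm
    · exact Finset.notMem_erase _ _ h
  have himg : J'.image e = J.image e := by
    rw [hJ'def, Finset.image_insert, ← hpe, ← Finset.image_insert, Finset.insert_erase hpJ]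
  have hjb' : j ∈ Finset.Icc 1 k \ J' := Finset.mem_sdiff.mpr ⟨hjI, hjJ'⟩
  have hK : K ⊆ Finset.Icc 1 k := Finset.insert_subset hbI hJ
  -- faces agree
  have heq1 : (face k e J).erase b = (Finset.Icc 1 k \ K) ∪ J.image e := erase_face_base he hJ hb
  have heq2 : (face k e J').erase j = (Finset.Icc 1 k \ K) ∪ J.image e := by
    rw [erase_face_base he hJ'sub hjb', hKeq, himg]
  -- counts
  have hc1 : (face k e J).filter (fun x => x < b)
      = (Finset.Icc 1 k \ K).filter (fun x => x < b) := by
    rw [count_base he hJ hbk, hKdef, ← filter_lt_sdiff_insert]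
  have hc2 : (face k e J').filter (fun x => x < j)
      = (Finset.Icc 1 k \ K).filter (fun x => x < j) := by
    rw [count_base he hJ'sub hjk, ← hKeq, ← filter_lt_sdiff_insert]
  -- signs
  have hprod1 : (∏ i ∈ J, (-1 : ℤ) ^ (i - 1 + k))
      = (-1 : ℤ) ^ (j - 1 + k) * ∏ i ∈ J.erase j, (-1 : ℤ) ^ (i - 1 + k) :=
    (Finset.mul_prod_erase J _ hpJ).symm
  have hprod2 : (∏ i ∈ J', (-1 : ℤ) ^ (i - 1 + k))
      = (-1 : ℤ) ^ (b - 1 + k) * ∏ i ∈ J.erase j, (-1 : ℤ) ^ (i - 1 + k) :=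
    Finset.prod_insert hbJ'
  -- interval fact
  have key : ∀ m M : ℕ, m < M → ((m = b ∧ M = j) ∨ (m = j ∧ M = b)) →
      ∀ x, m < x → x < M → x ∈ Finset.Icc 1 k \ K := by
    rintro m M hmM hcase x hmx hxM
    have hm1 : 1 ≤ m := by rcases hcase with ⟨rfl, rfl⟩ | ⟨rfl, rfl⟩ <;> omega
    have hMk : M ≤ k := by rcases hcase with ⟨rfl, rfl⟩ | ⟨rfl, rfl⟩ <;> omega
    have hxI : x ∈ Finset.Icc 1 k := Finset.mem_Icc.mpr ⟨by omega, by omega⟩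
    have hmI : m ∈ Finset.Icc 1 k := Finset.mem_Icc.mpr ⟨by omega, by omega⟩
    have hMI : M ∈ Finset.Icc 1 k := Finset.mem_Icc.mpr ⟨by omega, by omega⟩
    refine Finset.mem_sdiff.mpr ⟨hxI, ?_⟩
    intro hxK
    have hem : e m = e b := by rcases hcase with ⟨rfl, rfl⟩ | ⟨rfl, rfl⟩ <;> omega
    have heM : e M = e b := by rcases hcase with ⟨rfl, rfl⟩ | ⟨rfl, rfl⟩ <;> omega
    have h1 : e x ≤ e m := hmono m hmI x hxI (by omega)
    have h2 : e M ≤ e x := hmono x hxI M hMI (by omega)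
    have hex : e x = e b := by omega
    have hxb : x ≠ b := by rcases hcase with ⟨rfl, rfl⟩ | ⟨rfl, rfl⟩ <;> omega
    have hxj : x ≠ j := by rcases hcase with ⟨rfl, rfl⟩ | ⟨rfl, rfl⟩ <;> omega
    have hxJ : x ∈ J := by
      rcases Finset.mem_insert.mp hxK with h | h
      · exact absurd h hxb
      · exact h
    exact hxj (hinj hxJ hpJ (by rw [hex, ← hpe]))
  rw [heq1, heq2, hc1, hc2, hprod1, hprod2, ← Finsupp.single_add]
  have hbK : b ∈ K := Finset.mem_insert_self b J
  have hjK : j ∈ K := Finset.mem_insert_of_mem hpJ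
  have hpar : (((j - 1 + k) + ((Finset.Icc 1 k \ K).filter (fun x => x < b)).card)
      + ((b - 1 + k) + ((Finset.Icc 1 k \ K).filter (fun x => x < j)).card)) % 2 = 1 := by
    rcases Nat.lt_or_ge b j with hlt | hge
    · have hIC := interval_card hbK hlt (key b j hlt (Or.inl ⟨rfl, rfl⟩))
      omega
    · have hlt : j < b := by omega
      have hIC := interval_card hjK hlt (key j b hlt (Or.inr ⟨rfl, rfl⟩))
      omega
  have hc := pow_cancel hpar
  have hz : ((-1 : ℤ) ^ (j - 1 + k) * ∏ i ∈ J.erase j, (-1 : ℤ) ^ (i - 1 + k)) *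
        (-1) ^ (((Finset.Icc 1 k \ K).filter (fun x => x < b)).card)
      + ((-1 : ℤ) ^ (b - 1 + k) * ∏ i ∈ J.erase j, (-1 : ℤ) ^ (i - 1 + k)) *
        (-1) ^ (((Finset.Icc 1 k \ K).filter (fun x => x < j)).card) = 0 := by
    rw [pow_add, pow_add] at hc
    linear_combination (∏ i ∈ J.erase j, (-1 : ℤ) ^ (i - 1 + k)) * hc
  rw [hz, Finsupp.single_zero]
theorem stmt11 (k : ℕ) (hk : 0 < k) (e : ℕ → ℕ)
    (he : ∀ j ∈ Finset.Icc 1 k, e j ∈ Finset.Icc (k+1) (2*k))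
    (hmono : ∀ i ∈ Finset.Icc 1 k, ∀ j ∈ Finset.Icc 1 k, i ≤ j → e j ≤ e i) :
    ∑ J ∈ (Finset.Icc 1 k).powerset.filter (fun J => (J.image e).card = J.card),
      (∏ j ∈ J, (-1 : ℤ) ^ (j - 1 + k)) • bnd ((Finset.Icc 1 k \ J) ∪ J.image e) = 0 := by
  classical
  have step1 : ∑ J ∈ (Finset.Icc 1 k).powerset.filter (fun J => (J.image e).card = J.card),
      (∏ j ∈ J, (-1 : ℤ) ^ (j - 1 + k)) • bnd ((Finset.Icc 1 k \ J) ∪ J.image e)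
    = ∑ J ∈ (Finset.Icc 1 k).powerset.filter (fun J => (J.image e).card = J.card),
        ∑ a ∈ face k e J, Finsupp.single ((face k e J).erase a)
          ((∏ j ∈ J, (-1 : ℤ) ^ (j - 1 + k)) * (-1) ^ (((face k e J).filter (fun x => x < a)).card)) := by
    refine Finset.sum_congr rfl fun J hJ => ?_
    rw [show (Finset.Icc 1 k \ J) ∪ J.image e = face k e J from rfl, bnd, Finset.smul_sum]
    refine Finset.sum_congr rfl fun a ha => ?_
    rw [smul_smul, Finsupp.smul_single, smul_eq_mul, mul_one]
  rw [step1, Finset.sum_sigma']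
  refine Finset.sum_involution
    (fun x _ => if x.2 ≤ k then
        (if e x.2 ∈ x.1.image e then
          ⟨insert x.2 (x.1.erase (pick e x.1 (e x.2))), pick e x.1 (e x.2)⟩
        else ⟨insert x.2 x.1, e x.2⟩)
      else ⟨x.1.erase (pick e x.1 x.2), pick e x.1 x.2⟩)
    ?_ ?_ ?_ ?_
  · -- cancellation
    rintro ⟨J, a⟩ hx
    dsimp only at hx ⊢
    obtain ⟨hJ1, ha⟩ := Finset.mem_sigma.mp hx
    dsimp only at hJ1 ha
    obtain ⟨hJp, hcard⟩ := Finset.mem_filter.mp hJ1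
    have hJsub : J ⊆ Finset.Icc 1 k := Finset.mem_powerset.mp hJp
    have hinj : Set.InjOn e ↑J := Finset.card_image_iff.mp hcard
    by_cases hak : a ≤ k
    · have haJ : a ∈ Finset.Icc 1 k \ J := mem_face_le he hJsub ha hak
      by_cases heb : e a ∈ J.image e
      · simp only [if_pos hak, if_pos heb]
        exact caseB he hmono hJsub hinj haJ heb
      · simp only [if_pos hak, if_neg heb]
        exact caseA he hmono hJsub hinj haJ heb
    · have haI : a ∈ J.image e := by
        rcases Finset.mem_union.mp ha with h | h
        · obtain ⟨h1, -⟩ := Finset.mem_sdiff.mp h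
          rw [Finset.mem_Icc] at h1; omega
        · exact h
      obtain ⟨j0, hj0, hj0e⟩ := Finset.mem_image.mp haI
      obtain ⟨hpJ, hpe⟩ := pick_mem (e := e) ⟨j0, hj0, hj0e⟩
      set j := pick e J a with hjdef
      simp only [if_neg hak]
      have hbase : j ∈ Finset.Icc 1 k \ J.erase j :=
        Finset.mem_sdiff.mpr ⟨hJsub hpJ, Finset.notMem_erase _ _⟩
      have hnb : e j ∉ (J.erase j).image e := by
        intro h
        obtain ⟨i, hi, hie⟩ := Finset.mem_image.mp h
        exact Finset.notMem_erase j J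
          (hinj (Finset.mem_of_mem_erase hi) hpJ hie ▸ hi)
      have hA := caseA he hmono ((Finset.erase_subset _ _).trans hJsub)
        (hinj.mono (by exact_mod_cast Finset.erase_subset _ _)) hbase hnb
      rw [Finset.insert_erase hpJ, hpe] at hA
      rw [add_comm]
      exact hA
  · -- g x ≠ x
    rintro ⟨J, a⟩ hx -
    dsimp only at hx ⊢
    obtain ⟨hJ1, ha⟩ := Finset.mem_sigma.mp hx
    dsimp only at hJ1 ha
    obtain ⟨hJp, hcard⟩ := Finset.mem_filter.mp hJ1
    have hJsub : J ⊆ Finset.Icc 1 k := Finset.mem_powerset.mp hJp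
    by_cases hak : a ≤ k
    · have haJ : a ∈ Finset.Icc 1 k \ J := mem_face_le he hJsub ha hak
      have haI : a ∈ Finset.Icc 1 k := (Finset.mem_sdiff.mp haJ).1
      by_cases heb : e a ∈ J.image e
      · simp only [if_pos hak, if_pos heb]
        intro h
        have h2 : pick e J (e a) = a := congrArg (fun y : (_ : Finset ℕ) × ℕ => y.2) h
        obtain ⟨hpJ, -⟩ := pick_mem (e := e) (by
          obtain ⟨i, hi, hie⟩ := Finset.mem_image.mp heb
          exact ⟨i, hi, hie⟩)
        rw [h2] at hpJ
        exact (Finset.mem_sdiff.mp haJ).2 hpJ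
      · simp only [if_pos hak, if_neg heb]
        intro h
        have h2 : e a = a := congrArg (fun y : (_ : Finset ℕ) × ℕ => y.2) h
        have := he a haI
        rw [Finset.mem_Icc] at this
        omega
    · simp only [if_neg hak]
      intro h
      have h2 : pick e J a = a := congrArg (fun y : (_ : Finset ℕ) × ℕ => y.2) h
      have haI : a ∈ J.image e := by
        rcases Finset.mem_union.mp ha with h' | h'
        · obtain ⟨h1, -⟩ := Finset.mem_sdiff.mp h'
          rw [Finset.mem_Icc] at h1; omega
        · exact h'
      obtain ⟨j0, hj0, hj0e⟩ := Finset.mem_image.mp haI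
      obtain ⟨hpJ, -⟩ := pick_mem (e := e) ⟨j0, hj0, hj0e⟩
      have := Finset.mem_Icc.mp (hJsub (h2 ▸ hpJ))
      omega
  · -- g maps into the set
    rintro ⟨J, a⟩ hx
    dsimp only at hx ⊢
    obtain ⟨hJ1, ha⟩ := Finset.mem_sigma.mp hx
    dsimp only at hJ1 ha
    obtain ⟨hJp, hcard⟩ := Finset.mem_filter.mp hJ1
    have hJsub : J ⊆ Finset.Icc 1 k := Finset.mem_powerset.mp hJp
    have hinj : Set.InjOn e ↑J := Finset.card_image_iff.mp hcard
    by_cases hak : a ≤ k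
    · have haJ : a ∈ Finset.Icc 1 k \ J := mem_face_le he hJsub ha hak
      obtain ⟨haI, haJ2⟩ := Finset.mem_sdiff.mp haJ
      by_cases heb : e a ∈ J.image e
      · simp only [if_pos hak, if_pos heb]
        obtain ⟨j0, hj0, hj0e⟩ := Finset.mem_image.mp heb
        obtain ⟨hpJ, hpe⟩ := pick_mem (e := e) ⟨j0, hj0, hj0e⟩
        set j := pick e J (e a) with hjdef
        have haj : a ≠ j := fun h => haJ2 (h ▸ hpJ)
        have hbJ' : a ∉ J.erase j := fun h => haJ2 (Finset.mem_of_mem_erase h)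
        have hJ'sub : insert a (J.erase j) ⊆ Finset.Icc 1 k :=
          Finset.insert_subset haI ((Finset.erase_subset _ _).trans hJsub)
        have himg : (insert a (J.erase j)).image e = J.image e := by
          rw [Finset.image_insert, ← hpe, ← Finset.image_insert, Finset.insert_erase hpJ]
        have hjJ' : j ∉ insert a (J.erase j) := by
          rw [Finset.mem_insert]
          rintro (h | h)
          · exact haj h.symm
          · exact Finset.notMem_erase _ _ h
        refine Finset.mem_sigma.mpr ⟨Finset.mem_filter.mpr ⟨Finset.mem_powerset.mpr hJ'sub, ?_⟩, ?_⟩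
        · rw [himg, hcard, Finset.card_insert_of_notMem hbJ', Finset.card_erase_of_mem hpJ]
          have : 1 ≤ J.card := Finset.card_pos.mpr ⟨j, hpJ⟩
          omega
        · exact Finset.mem_union_left _ (Finset.mem_sdiff.mpr ⟨hJsub hpJ, hjJ'⟩)
      · simp only [if_pos hak, if_neg heb]
        refine Finset.mem_sigma.mpr ⟨Finset.mem_filter.mpr
          ⟨Finset.mem_powerset.mpr (Finset.insert_subset haI hJsub), ?_⟩, ?_⟩
        · rw [Finset.image_insert, Finset.card_insert_of_notMem heb,
            Finset.card_insert_of_notMem haJ2, hcard]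
        · exact Finset.mem_union_right _
            (Finset.mem_image_of_mem e (Finset.mem_insert_self a J))
    · have haI : a ∈ J.image e := by
        rcases Finset.mem_union.mp ha with h' | h'
        · obtain ⟨h1, -⟩ := Finset.mem_sdiff.mp h'
          rw [Finset.mem_Icc] at h1; omega
        · exact h'
      obtain ⟨j0, hj0, hj0e⟩ := Finset.mem_image.mp haI
      obtain ⟨hpJ, hpe⟩ := pick_mem (e := e) ⟨j0, hj0, hj0e⟩
      set j := pick e J a with hjdef
      simp only [if_neg hak]
      refine Finset.mem_sigma.mpr ⟨Finset.mem_filter.mpr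
        ⟨Finset.mem_powerset.mpr ((Finset.erase_subset _ _).trans hJsub), ?_⟩, ?_⟩
      · rw [image_erase_injOn hinj hpJ,
          Finset.card_erase_of_mem (Finset.mem_image_of_mem e hpJ),
          Finset.card_erase_of_mem hpJ, hcard]
      · exact Finset.mem_union_left _
          (Finset.mem_sdiff.mpr ⟨hJsub hpJ, Finset.notMem_erase _ _⟩)
  · -- involution
    rintro ⟨J, a⟩ hx
    dsimp only at hx ⊢
    obtain ⟨hJ1, ha⟩ := Finset.mem_sigma.mp hx
    dsimp only at hJ1 ha
    obtain ⟨hJp, hcard⟩ := Finset.mem_filter.mp hJ1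
    have hJsub : J ⊆ Finset.Icc 1 k := Finset.mem_powerset.mp hJp
    have hinj : Set.InjOn e ↑J := Finset.card_image_iff.mp hcard
    by_cases hak : a ≤ k
    · have haJ : a ∈ Finset.Icc 1 k \ J := mem_face_le he hJsub ha hak
      obtain ⟨haI, haJ2⟩ := Finset.mem_sdiff.mp haJ
      by_cases heb : e a ∈ J.image e
      · -- case B
        obtain ⟨j0, hj0, hj0e⟩ := Finset.mem_image.mp heb
        obtain ⟨hpJ, hpe⟩ := pick_mem (e := e) ⟨j0, hj0, hj0e⟩
        set j := pick e J (e a) with hjdef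
        have haj : a ≠ j := fun h => haJ2 (h ▸ hpJ)
        have hbJ' : a ∉ J.erase j := fun h => haJ2 (Finset.mem_of_mem_erase h)
        have hjk : j ≤ k := (Finset.mem_Icc.mp (hJsub hpJ)).2
        have himg : (insert a (J.erase j)).image e = J.image e := by
          rw [Finset.image_insert, ← hpe, ← Finset.image_insert, Finset.insert_erase hpJ]
        have hcardJ' : ((insert a (J.erase j)).image e).card = (insert a (J.erase j)).card := by
          rw [himg, hcard, Finset.card_insert_of_notMem hbJ', Finset.card_erase_of_mem hpJ]
          have : 1 ≤ J.card := Finset.card_pos.mpr ⟨j, hpJ⟩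
          omega
        have hinjJ' : Set.InjOn e ↑(insert a (J.erase j)) := Finset.card_image_iff.mp hcardJ'
        have hejmem : e j ∈ (insert a (J.erase j)).image e :=
          Finset.mem_image.mpr ⟨a, Finset.mem_insert_self _ _, hpe.symm⟩
        simp only [if_pos hak, if_pos heb, if_pos hjk, if_pos hejmem]
        have hpick2 : pick e (insert a (J.erase j)) (e j) = a := by
          rw [hpe]
          exact pick_unique hinjJ' (Finset.mem_insert_self _ _)
        rw [hpick2, Finset.erase_insert hbJ', Finset.insert_erase hpJ]
      · -- case A
        have heak : ¬ e a ≤ k := by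
          have := he a haI
          rw [Finset.mem_Icc] at this
          omega
        have hinjK : Set.InjOn e ↑(insert a J) := by
          rw [Finset.coe_insert, Set.injOn_insert (by exact_mod_cast haJ2)]
          exact ⟨hinj, by rw [← Finset.coe_image]; exact_mod_cast heb⟩
        simp only [if_pos hak, if_neg heb, if_neg heak]
        rw [pick_unique hinjK (Finset.mem_insert_self a J), Finset.erase_insert haJ2]
    · -- inverse of case A
      have haI : a ∈ J.image e := by
        rcases Finset.mem_union.mp ha with h' | h'
        · obtain ⟨h1, -⟩ := Finset.mem_sdiff.mp h'
          rw [Finset.mem_Icc] at h1; omega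
        · exact h'
      obtain ⟨j0, hj0, hj0e⟩ := Finset.mem_image.mp haI
      obtain ⟨hpJ, hpe⟩ := pick_mem (e := e) ⟨j0, hj0, hj0e⟩
      set j := pick e J a with hjdef
      have hjk : j ≤ k := (Finset.mem_Icc.mp (hJsub hpJ)).2
      have hnb : e j ∉ (J.erase j).image e := by
        intro h
        obtain ⟨i, hi, hie⟩ := Finset.mem_image.mp h
        exact Finset.notMem_erase j J
          (hinj (Finset.mem_of_mem_erase hi) hpJ hie ▸ hi)
      simp only [if_neg hak, if_pos hjk, if_neg hnb]
      rw [Finset.insert_erase hpJ, hpe]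
end aux
end

section
/- Let G be a finite connected multigraph whose underlying simple graph is a tree (a multi-edged tree), and let Π be a partition of V into connected parts. Then the quotient simple graph G̃_Π is a tree, and consequently any two acyclic orientations of G̃_Π are related by a sequence of switches at critical sets (all orientations of a tree lie in one switching equivalence class). -/
/-- Adjacency-generating relation of the quotient simple graph. -/
def qrel {V ι : Type*} (m : V → V → ℕ) (p : V → ι) : ι → ι → Prop :=
  fun i j => ∃ u v, p u = i ∧ p v = j ∧ 0 < m u v

/-- `o'` is obtained from `o` by a switch at a critical set. -/
def switchStep {ι : Type*} (o o' : ι → ι → Prop) : Prop :=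
  ∃ A : Set ι,
    ((∀ i j, o i j → i ∈ A → j ∈ A) ∨ (∀ i j, o i j → i ∉ A → j ∉ A)) ∧
    (∀ i j, o' i j ↔
      ((((i ∈ A) ↔ (j ∈ A)) ∧ o i j) ∨ (¬((i ∈ A) ↔ (j ∈ A)) ∧ o j i)))

/-!
Every edge `uv` of a forest is the only edge leaving the component `B` of `v` in `G - uv`, and
a graph with this property is a forest. When the fibres of `p` are connected, such a `B` is a
union of fibres (a fibre meeting `B` and its complement would contain the edge `uv`, whose ends
lie in different fibres), so its image is left only by the edge `(p v, p u)` of the quotient;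
hence the quotient is a forest, connected when `G` is and `p` is onto. In a forest these sets
are critical for every orientation, and the switch at one of them reverses a single arc, so two
orientations are joined by reversing, one at a time, the arcs on which they differ.
-/

namespace SimpleGraph

variable {V ι : Type*}

def IsSoleExit (H : SimpleGraph V) (B : Set V) (v u : V) : Prop :=
  v ∈ B ∧ u ∉ B ∧ ∀ x y, H.Adj x y → x ∈ B → y ∉ B → x = v ∧ y = u

section SoleExit

variable {H : SimpleGraph V}

lemma IsAcyclic.exists_isSoleExit (hH : H.IsAcyclic) {u v : V} (huv : H.Adj u v) :
    ∃ B, H.IsSoleExit B v u := by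
  have hbr : ¬(H.deleteEdges {s(u, v)}).Reachable u v :=
    isBridge_iff.1 (isAcyclic_iff_forall_adj_isBridge.1 hH huv)
  refine ⟨{w | (H.deleteEdges {s(u, v)}).Reachable v w}, .refl v, fun h => hbr h.symm, ?_⟩
  intro x y hxy hx hy
  by_cases hs : s(x, y) = s(u, v)
  · rcases Sym2.eq_iff.1 hs with ⟨rfl, rfl⟩ | ⟨rfl, rfl⟩
    · exact absurd hx.symm hbr
    · exact ⟨rfl, rfl⟩
  · exact absurd (hx.trans (deleteEdges_adj.2 ⟨hxy, hs⟩).reachable) hy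

lemma isAcyclic_of_forall_adj_exists_isSoleExit
    (h : ∀ u v, H.Adj u v → ∃ B, H.IsSoleExit B v u) : H.IsAcyclic := by
  refine isAcyclic_iff_forall_adj_isBridge.2 fun u v huv ⟨w⟩ => ?_
  obtain ⟨B, hvB, huB, hexit⟩ := h u v huv
  obtain ⟨d, -, hd₁, hd₂⟩ := w.exists_boundary_dart Bᶜ huB (not_not.2 hvB)
  obtain ⟨hadj, hne⟩ := deleteEdges_adj.1 d.adj
  obtain ⟨h₁, h₂⟩ := hexit _ _ hadj.symm (not_not.1 hd₂) hd₁
  exact hne (by rw [h₁, h₂]; rfl)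

end SoleExit

/-- The graph `G̃_Π` of the paper, for `Π` the partition of `V` into the fibres of `p`. -/
def quotient (G : SimpleGraph V) (p : V → ι) : SimpleGraph ι :=
  fromRel fun i j => ∃ u v, p u = i ∧ p v = j ∧ G.Adj u v

section Quotient

variable {G : SimpleGraph V} {p : V → ι}

lemma quotient_adj {i j : ι} :
    (G.quotient p).Adj i j ↔ i ≠ j ∧ ∃ u v, p u = i ∧ p v = j ∧ G.Adj u v := by
  refine (fromRel_adj _ _ _).trans (and_congr_right fun _ => ⟨?_, Or.inl⟩)
  rintro (h | ⟨u, v, rfl, rfl, huv⟩)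
  · exact h
  · exact ⟨v, u, rfl, rfl, huv.symm⟩

lemma quotient_fromRel (r : V → V → Prop) :
    (fromRel r).quotient p = fromRel fun i j => ∃ u v, p u = i ∧ p v = j ∧ r u v := by
  ext i j
  simp only [quotient_adj, fromRel_adj]
  grind

lemma Adj.quotient {u v : V} (h : G.Adj u v) (hp : p u ≠ p v) :
    (G.quotient p).Adj (p u) (p v) :=
  quotient_adj.2 ⟨hp, u, v, rfl, rfl, h⟩

lemma Reachable.quotient {u v : V} (h : G.Reachable u v) :
    (G.quotient p).Reachable (p u) (p v) := by
  obtain ⟨w⟩ := h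
  induction w with
  | nil => rfl
  | @cons a b _ hab _ ih =>
    refine .trans ?_ ih
    by_cases hp : p a = p b
    · rw [hp]
    · exact (hab.quotient hp).reachable

lemma Connected.quotient (hG : G.Connected) (hp : p.Surjective) : (G.quotient p).Connected := by
  have : Nonempty ι := hG.nonempty.map p
  refine ⟨fun i j => ?_⟩
  obtain ⟨u, rfl⟩ := hp i
  obtain ⟨v, rfl⟩ := hp j
  exact (hG u v).quotient

variable (hfib : ∀ i, (G.induce {v | p v = i}).Connected)
include hfib

lemma IsSoleExit.mem_of_map_eq {B : Set V} {u v : V} (hB : G.IsSoleExit B v u) (huv : p u ≠ p v)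
    {w w' : V} (h : p w = p w') (hw : w ∈ B) : w' ∈ B := by
  by_contra hw'
  obtain ⟨c⟩ := (hfib (p w)).preconnected ⟨w, rfl⟩ ⟨w', h.symm⟩
  obtain ⟨d, -, hd₁, hd₂⟩ := c.exists_boundary_dart {z | (z : V) ∈ B} hw hw'
  obtain ⟨h₁, h₂⟩ := hB.2.2 d.fst d.snd (induce_adj.1 d.adj) hd₁ hd₂
  exact huv (by rw [← h₁, ← h₂]; exact d.snd.2.trans d.fst.2.symm)

lemma IsSoleExit.quotient {B : Set V} {u v : V} (hB : G.IsSoleExit B v u) (huv : p u ≠ p v) :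
    (G.quotient p).IsSoleExit (p '' B) (p v) (p u) := by
  have hsat : ∀ w, p w ∈ p '' B ↔ w ∈ B := fun w =>
    ⟨fun ⟨w', hw', he⟩ => hB.mem_of_map_eq hfib huv he hw', fun hw => ⟨w, hw, rfl⟩⟩
  refine ⟨⟨v, hB.1, rfl⟩, fun h => hB.2.1 ((hsat u).1 h), ?_⟩
  rintro _ _ hij hi hj
  obtain ⟨-, x, y, rfl, rfl, hxy⟩ := quotient_adj.1 hij
  obtain ⟨rfl, rfl⟩ := hB.2.2 x y hxy ((hsat x).1 hi) fun hy => hj ((hsat y).2 hy)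
  exact ⟨rfl, rfl⟩

lemma IsAcyclic.quotient (hG : G.IsAcyclic) : (G.quotient p).IsAcyclic :=
  isAcyclic_of_forall_adj_exists_isSoleExit fun _ _ hij => by
    obtain ⟨hne, x, y, rfl, rfl, hxy⟩ := quotient_adj.1 hij
    obtain ⟨B, hB⟩ := hG.exists_isSoleExit hxy
    exact ⟨_, hB.quotient hfib hne⟩

lemma IsTree.quotient (hG : G.IsTree) (hp : p.Surjective) : (G.quotient p).IsTree :=
  ⟨hG.connected.quotient hp, hG.isAcyclic.quotient hfib⟩

end Quotient

end SimpleGraph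

def reverseArc {ι : Type*} (o : ι → ι → Prop) (a b : ι) : ι → ι → Prop :=
  fun x y => (o x y ∧ ¬(x = a ∧ y = b)) ∨ (x = b ∧ y = a)

namespace SimpleGraph

variable {ι : Type*}

structure IsOrientation (H : SimpleGraph ι) (o : ι → ι → Prop) : Prop where
  adj : ∀ i j, o i j → H.Adj i j
  total : ∀ i j, H.Adj i j → o i j ∨ o j i
  asymm : ∀ i j, o i j → ¬o j i

variable {H : SimpleGraph ι} {o o₁ o₂ : ι → ι → Prop} {a b : ι}

lemma IsOrientation.eq_of_le (h₁ : H.IsOrientation o₁) (h₂ : H.IsOrientation o₂)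
    (h : ∀ i j, o₁ i j → o₂ i j) : o₁ = o₂ := by
  funext i j
  refine propext ⟨h i j, fun h₂ij => ?_⟩
  exact (h₁.total i j (h₂.adj i j h₂ij)).resolve_right fun h₁ji => h₂.asymm i j h₂ij (h j i h₁ji)

lemma IsOrientation.reverseArc (ho : H.IsOrientation o) (hab : o a b) :
    H.IsOrientation (reverseArc o a b) := by
  constructor <;> unfold _root_.reverseArc <;> grind [ho.adj, ho.total, ho.asymm, H.adj_symm]

lemma switchStep_reverseArc {A : Set ι} (ho : H.IsOrientation o) (hab : o a b)
    (hA : H.IsSoleExit A b a) : switchStep o (reverseArc o a b) := by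
  obtain ⟨hb, ha, hexit⟩ := hA
  have hcross : ∀ x y, H.Adj x y → ¬((x ∈ A) ↔ (y ∈ A)) → (x = b ∧ y = a) ∨ (x = a ∧ y = b) := by
    intro x y hxy hne
    by_cases hx : x ∈ A
    · exact .inl (hexit x y hxy hx fun hy => hne (iff_of_true hx hy))
    · exact .inr (hexit y x hxy.symm (by tauto) hx).symm
  refine ⟨A, .inl fun x y hxy hx => ?_, fun x y => ?_⟩
  · by_contra hy
    obtain ⟨rfl, rfl⟩ := hexit x y (ho.adj x y hxy) hx hy
    exact ho.asymm _ _ hab hxy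
  · unfold reverseArc
    grind [ho.adj, ho.asymm]

lemma setOf_reverseArc_and_not (ho : H.IsOrientation o) (hab : o a b) (hba : o₂ b a) :
    {q : ι × ι | reverseArc o a b q.1 q.2 ∧ ¬o₂ q.1 q.2} =
      {q | o q.1 q.2 ∧ ¬o₂ q.1 q.2} \ {(a, b)} := by
  have hne := (ho.adj a b hab).ne
  ext ⟨x, y⟩
  simp only [reverseArc, Set.mem_ofPred_eq, Set.mem_sdiff, Set.mem_singleton_iff, Prod.mk.injEq]
  grind

theorem IsAcyclic.reflTransGen_switchStep [Finite ι] (hH : H.IsAcyclic)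
    (h₁ : H.IsOrientation o₁) (h₂ : H.IsOrientation o₂) : Relation.ReflTransGen switchStep o₁ o₂ := by
  suffices ∀ S : Set (ι × ι), S.Finite → ∀ o, H.IsOrientation o →
      {q | o q.1 q.2 ∧ ¬o₂ q.1 q.2} = S → Relation.ReflTransGen switchStep o o₂ from
    this _ (Set.toFinite _) o₁ h₁ rfl
  intro S hS
  induction S, hS using Set.Finite.induction_on with
  | empty =>
    rintro o ho hS
    have hle : ∀ i j, o i j → o₂ i j := fun i j hij =>
      not_not.1 fun h => Set.eq_empty_iff_forall_notMem.1 hS (i, j) ⟨hij, h⟩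
    rw [ho.eq_of_le h₂ hle]
  | @insert q S hq _ ih =>
    rintro o ho hS
    obtain ⟨a, b⟩ := q
    obtain ⟨hab, hnab⟩ : (a, b) ∈ {q : ι × ι | o q.1 q.2 ∧ ¬o₂ q.1 q.2} :=
      hS ▸ Set.mem_insert _ _
    obtain ⟨A, hA⟩ := hH.exists_isSoleExit (ho.adj a b hab)
    have hba := (h₂.total a b (ho.adj a b hab)).resolve_left hnab
    refine .head (switchStep_reverseArc ho hab hA) (ih _ (ho.reverseArc hab) ?_)
    rw [setOf_reverseArc_and_not ho hab hba, hS, Set.insert_sdiff_self_of_notMem hq]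

end SimpleGraph

open SimpleGraph

theorem stmt18_general {V ι : Type*} [Fintype ι]
    (m : V → V → ℕ)
    (htree : (SimpleGraph.fromRel (fun u v => 0 < m u v)).IsTree)
    (p : V → ι) (hsurj : Function.Surjective p)
    (hpconn : ∀ i : ι, ((SimpleGraph.fromRel (fun u v => 0 < m u v)).induce {v : V | p v = i}).Connected) :
    (SimpleGraph.fromRel (qrel m p)).IsTree ∧
    ∀ o₁ o₂ : ι → ι → Prop,
      ((∀ i j, o₁ i j → (SimpleGraph.fromRel (qrel m p)).Adj i j) ∧
       (∀ i j, (SimpleGraph.fromRel (qrel m p)).Adj i j → o₁ i j ∨ o₁ j i) ∧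
       (∀ i j, o₁ i j → ¬ o₁ j i)) →
      ((∀ i j, o₂ i j → (SimpleGraph.fromRel (qrel m p)).Adj i j) ∧
       (∀ i j, (SimpleGraph.fromRel (qrel m p)).Adj i j → o₂ i j ∨ o₂ j i) ∧
       (∀ i j, o₂ i j → ¬ o₂ j i)) →
      Relation.ReflTransGen switchStep o₁ o₂ := by
  have hquot : fromRel (qrel m p) = (fromRel fun u v => 0 < m u v).quotient p :=
    (quotient_fromRel _).symm
  have hquotTree := htree.quotient hpconn hsurj
  rw [hquot]
  exact ⟨hquotTree, fun o₁ o₂ ⟨adj₁, total₁, asymm₁⟩ ⟨adj₂, total₂, asymm₂⟩ =>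
    hquotTree.isAcyclic.reflTransGen_switchStep ⟨adj₁, total₁, asymm₁⟩ ⟨adj₂, total₂, asymm₂⟩⟩

theorem stmt18 {V ι : Type*} [Fintype V] [DecidableEq V] [Fintype ι] [DecidableEq ι]
    (m : V → V → ℕ) (hsymm : ∀ u v, m u v = m v u) (hloop : ∀ v, m v v = 0)
    (htree : (SimpleGraph.fromRel (fun u v => 0 < m u v)).IsTree)
    (p : V → ι) (hsurj : Function.Surjective p)
    (hpconn : ∀ i : ι, ((SimpleGraph.fromRel (fun u v => 0 < m u v)).induce {v : V | p v = i}).Connected) :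
    (SimpleGraph.fromRel (qrel m p)).IsTree ∧
    ∀ o₁ o₂ : ι → ι → Prop,
      ((∀ i j, o₁ i j → (SimpleGraph.fromRel (qrel m p)).Adj i j) ∧
       (∀ i j, (SimpleGraph.fromRel (qrel m p)).Adj i j → o₁ i j ∨ o₁ j i) ∧
       (∀ i j, o₁ i j → ¬ o₁ j i)) →
      ((∀ i j, o₂ i j → (SimpleGraph.fromRel (qrel m p)).Adj i j) ∧
       (∀ i j, (SimpleGraph.fromRel (qrel m p)).Adj i j → o₂ i j ∨ o₂ j i) ∧
       (∀ i j, o₂ i j → ¬ o₂ j i)) →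
      Relation.ReflTransGen switchStep o₁ o₂ :=
  stmt18_general m htree p hsurj hpconn
end
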